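/- arXiv:2412.11406 — 7 statements merged into one kernel-verified Lean document; each statement's English description precedes it below -/
import Mathlib

section
/- If the intersection matrix (E_i·E_j) of a finite collection of curves is negative definite, then there exists a positive cycle Z = Σ r_i E_i with all r_i > 0 such that Z·E_i ≤ 0 for all i. -/
open Matrix

lemma clear_denoms' {n : ℕ} (x : Fin n → ℚ) :
    ∃ d : ℤ, 0 < d ∧ ∃ y : Fin n → ℤ, ∀ i, (y i : ℚ) = d * x i := by
  refine ⟨∏ i, ((x i).den : ℤ), ?_, ?_⟩
  · exact Finset.prod_pos (fun i _ => Int.natCast_pos.mpr (x i).den_pos)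
  · have h : ∀ i, ∃ z : ℤ, (z:ℚ) = ((∏ j, ((x j).den : ℤ) : ℤ) : ℚ) * x i := by
      intro i
      obtain ⟨e, he⟩ := Finset.dvd_prod_of_mem (fun j => ((x j).den : ℤ)) (Finset.mem_univ i)
      refine ⟨e * (x i).num, ?_⟩
      have hd : ((x i).den : ℚ) * x i = (x i).num := by
        rw [mul_comm]; exact_mod_cast Rat.mul_den_eq_num (x i)
      rw [he]
      push_cast
      rw [← hd]; ring
    choose y hy using h
    exact ⟨y, fun i => by exact_mod_cast hy i⟩

-- negative definiteness over ℚ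
lemma negdef_rat {n : ℕ} (M : Matrix (Fin n) (Fin n) ℤ)
    (hneg : ∀ x : Fin n → ℤ, x ≠ 0 → x ⬝ᵥ M.mulVec x < 0) :
    ∀ x : Fin n → ℚ, x ≠ 0 →
      x ⬝ᵥ (M.map (Int.cast : ℤ → ℚ)).mulVec x < 0 := by
  intro x hx
  obtain ⟨d, hd, y, hy⟩ := clear_denoms' x
  have hy0 : y ≠ 0 := by
    intro h
    apply hx
    funext i
    have := hy i
    rw [h] at this
    simp at this
    rcases this with h1 | h1
    · exact absurd h1 (by exact_mod_cast hd.ne')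
    · exact h1
  have h1 : (↑(y ⬝ᵥ M.mulVec y) : ℚ)
      = (fun i => (y i : ℚ)) ⬝ᵥ (M.map (Int.cast : ℤ → ℚ)).mulVec (fun i => (y i : ℚ)) := by
    simp [dotProduct, mulVec, Matrix.map_apply, Finset.mul_sum]
  have h2 : (fun i => (y i : ℚ)) = (d : ℚ) • x := by
    funext i; simp [hy i]
  have h3 := hneg y hy0
  have h4 : (↑(y ⬝ᵥ M.mulVec y) : ℚ) < 0 := by exact_mod_cast h3
  rw [h1, h2, smul_dotProduct, mulVec_smul, dotProduct_smul] at h4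
  simp only [smul_eq_mul] at h4
  have hd2 : (0:ℚ) < (d:ℚ) * (d:ℚ) := by positivity
  nlinarith [h4]

/-- If the intersection matrix is negative definite (with nonnegative off-diagonal
entries), there exists a positive cycle Z with Z·E_i ≤ 0 for all i. -/
theorem exists_positive_cycle
    {n : ℕ} (M : Matrix (Fin n) (Fin n) ℤ)
    (hsymm : M.IsSymm)
    (hoff : ∀ i j, i ≠ j → 0 ≤ M i j)
    (hneg : ∀ x : Fin n → ℤ, x ≠ 0 → x ⬝ᵥ M.mulVec x < 0) :
    ∃ Z : Fin n → ℤ, (∀ i, 0 < Z i) ∧ ∀ i, M.mulVec Z i ≤ 0 := by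
  set Mq : Matrix (Fin n) (Fin n) ℚ := M.map (Int.cast : ℤ → ℚ) with hMq
  have hnegQ := negdef_rat M hneg
  -- det nonzero
  have hdet : Mq.det ≠ 0 := by
    intro h
    obtain ⟨v, hv0, hv⟩ := (Matrix.exists_mulVec_eq_zero_iff).mpr h
    have := hnegQ v hv0
    rw [hv] at this
    simp at this
  have hunit : IsUnit Mq.det := isUnit_iff_ne_zero.mpr hdet
  set Z₀ : Fin n → ℚ := Mq⁻¹.mulVec (fun _ => -1) with hZ₀
  have hMZ : Mq.mulVec Z₀ = fun _ => -1 := by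
    rw [hZ₀, mulVec_mulVec, Matrix.mul_nonsing_inv _ hunit, one_mulVec]
  set P : Fin n → ℚ := fun i => max (Z₀ i) 0 with hP
  set N : Fin n → ℚ := fun i => max (-Z₀ i) 0 with hN
  have hPnn : ∀ i, 0 ≤ P i := fun i => le_max_right _ _
  have hNnn : ∀ i, 0 ≤ N i := fun i => le_max_right _ _
  have hPNmul : ∀ i, N i * P i = 0 := by
    intro i
    rcases le_total (Z₀ i) 0 with h | h
    · simp [hP, hN, max_eq_right h]
    · simp [hP, hN, max_eq_right (neg_nonpos_of_nonneg h)]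
  have hPN : ∀ i, P i - N i = Z₀ i := by
    intro i
    rcases le_total (Z₀ i) 0 with h | h
    · simp [hP, hN, max_eq_right h, max_eq_left (neg_nonneg.mpr h)]
    · simp [hP, hN, max_eq_left h, max_eq_right (neg_nonpos_of_nonneg h)]
  have hoffQ : ∀ i j, i ≠ j → (0:ℚ) ≤ Mq i j := by
    intro i j hij
    simpa [hMq, Matrix.map_apply] using (by exact_mod_cast hoff i j hij : (0:ℚ) ≤ (M i j : ℚ))
  have hNP : 0 ≤ N ⬝ᵥ Mq.mulVec P := by
    simp only [dotProduct, mulVec]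
    apply Finset.sum_nonneg
    intro i _
    rw [Finset.mul_sum]
    apply Finset.sum_nonneg
    intro j _
    rcases eq_or_ne i j with rfl | hij
    · have h2 : N i * (Mq i i * P i) = Mq i i * (N i * P i) := by ring
      rw [h2, hPNmul i, mul_zero]
    · exact mul_nonneg (hNnn i) (mul_nonneg (hoffQ i j hij) (hPnn j))
  have hNN : 0 ≤ N ⬝ᵥ Mq.mulVec N := by
    have hsub : Mq.mulVec N = Mq.mulVec P - Mq.mulVec Z₀ := by
      have hNe : N = P - Z₀ := by
        funext i
        have := hPN i
        show N i = P i - Z₀ i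
        linarith
      rw [hNe, Matrix.mulVec_sub]
    rw [hsub, dotProduct_sub, hMZ]
    have : N ⬝ᵥ (fun _ => (-1:ℚ)) = -∑ i, N i := by
      simp [dotProduct]
    rw [this]
    have : 0 ≤ ∑ i, N i := Finset.sum_nonneg (fun i _ => hNnn i)
    linarith
  have hN0 : N = 0 := by
    by_contra h
    have := hnegQ N h
    linarith
  have hZnn : ∀ i, 0 ≤ Z₀ i := by
    intro i
    have : N i = 0 := by rw [hN0]; rfl
    have h2 : -Z₀ i ≤ 0 := by
      by_contra h3
      push_neg at h3
      rw [hN] at this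
      simp only [max_eq_left h3.le] at this
      linarith
    linarith
  have hZpos : ∀ i, 0 < Z₀ i := by
    intro i
    rcases lt_or_eq_of_le (hZnn i) with h | h
    · exact h
    have hrow : ∑ j, Mq i j * Z₀ j = -1 := by
      have := congrFun hMZ i
      simpa [mulVec, dotProduct] using this
    have : (0:ℚ) ≤ ∑ j, Mq i j * Z₀ j := by
      apply Finset.sum_nonneg
      intro j _
      rcases eq_or_ne i j with rfl | hij
      · rw [← h]; ring_nf; simp
      · exact mul_nonneg (hoffQ i j hij) (hZnn j)
    rw [hrow] at this
    linarith
  -- clear denominators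
  obtain ⟨d, hd, y, hy⟩ := clear_denoms' Z₀
  refine ⟨y, ?_, ?_⟩
  · intro i
    have : (0:ℚ) < (y i : ℚ) := by
      rw [hy i]
      exact mul_pos (by exact_mod_cast hd) (hZpos i)
    exact_mod_cast this
  · intro i
    have hcast : ((M.mulVec y i : ℤ) : ℚ) = (d:ℚ) * (Mq.mulVec Z₀ i) := by
      simp only [mulVec, dotProduct, hMq, Matrix.map_apply]
      push_cast
      rw [Finset.mul_sum]
      apply Finset.sum_congr rfl
      intro j _
      rw [hy j]
      ring
    rw [hMZ] at hcast
    simp only at hcast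
    have : ((M.mulVec y i : ℤ) : ℚ) ≤ 0 := by
      rw [hcast]
      have : (0:ℚ) < d := by exact_mod_cast hd
      nlinarith
    exact_mod_cast this
end

section
/- Suppose there exists a positive cycle Z = Σ r_i E_i (all r_i > 0) with Z·E_i ≤ 0 for all i, for a connected configuration. Then the intersection matrix is negative semi-definite; if moreover Z² < 0, the intersection matrix is negative definite. -/
open Matrix Finset


private lemma key_identity {n : ℕ} (M : Matrix (Fin n) (Fin n) ℤ)
    (hsymm : M.IsSymm) (Z : Fin n → ℤ) (hZpos : ∀ i, 0 < Z i)
    (x : Fin n → ℤ) :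
    ((x ⬝ᵥ M.mulVec x : ℤ) : ℚ) =
      (∑ i, ((M.mulVec Z i : ℤ) : ℚ) * (Z i : ℚ) * ((x i : ℚ) / (Z i : ℚ))^2)
      - (1/2) * ∑ i, ∑ j, (M i j : ℚ) * (Z i : ℚ) * (Z j : ℚ) *
          (((x i : ℚ) / (Z i : ℚ)) - ((x j : ℚ) / (Z j : ℚ)))^2 := by
  have hZne : ∀ i, (Z i : ℚ) ≠ 0 := fun i => by
    exact_mod_cast (hZpos i).ne'
  set t : Fin n → ℚ := fun i => (x i : ℚ) / (Z i : ℚ) with ht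
  have hx : ∀ i, (x i : ℚ) = (Z i : ℚ) * t i := fun i => by
    rw [ht]; rw [mul_div_assoc', mul_comm, mul_div_assoc, div_self (hZne i), mul_one]
  have hMsymm : ∀ i j, (M j i : ℚ) = (M i j : ℚ) := fun i j => by
    exact_mod_cast congrArg Int.cast (hsymm.apply i j)
  -- expand everything into double sums
  have lhs_eq : ((x ⬝ᵥ M.mulVec x : ℤ) : ℚ)
      = ∑ i, ∑ j, (M i j : ℚ) * (Z i : ℚ) * (Z j : ℚ) * t i * t j := by
    simp only [dotProduct, mulVec, Finset.mul_sum]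
    push_cast
    refine Finset.sum_congr rfl fun i _ => Finset.sum_congr rfl fun j _ => ?_
    rw [hx i, hx j]; ring
  have fst_eq : (∑ i, ((M.mulVec Z i : ℤ) : ℚ) * (Z i : ℚ) * t i ^ 2)
      = ∑ i, ∑ j, (M i j : ℚ) * (Z i : ℚ) * (Z j : ℚ) * t i ^ 2 := by
    refine Finset.sum_congr rfl fun i _ => ?_
    simp only [mulVec, dotProduct]
    push_cast
    rw [Finset.sum_mul, Finset.sum_mul]
    exact Finset.sum_congr rfl fun j _ => by ring
  rw [lhs_eq, fst_eq]
  -- reduce to antisymmetric-sum vanishing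
  set f : Fin n → Fin n → ℚ :=
    fun i j => (1/2) * (M i j : ℚ) * (Z i : ℚ) * (Z j : ℚ) * (t j ^ 2 - t i ^ 2) with hf
  have hanti : ∀ i j, f i j = - f j i := fun i j => by
    simp only [hf]; rw [hMsymm i j]; ring
  have hzero : (∑ i, ∑ j, f i j) = 0 := by
    have h1 : (∑ i, ∑ j, f i j) = ∑ j, ∑ i, f i j := Finset.sum_comm
    have h2 : (∑ j, ∑ i : Fin n, f i j) = - ∑ j, ∑ i : Fin n, f j i := by
      rw [← Finset.sum_neg_distrib]
      refine Finset.sum_congr rfl fun j _ => ?_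
      rw [← Finset.sum_neg_distrib]
      exact Finset.sum_congr rfl fun i _ => hanti i j
    have hS : (∑ i, ∑ j, f i j) = - ∑ i, ∑ j, f i j := h1.trans h2
    linarith
  have expand : ∀ i j : Fin n,
      (M i j : ℚ) * (Z i : ℚ) * (Z j : ℚ) * t i * t j
      = (M i j : ℚ) * (Z i : ℚ) * (Z j : ℚ) * t i ^ 2
        - (1/2) * ((M i j : ℚ) * (Z i : ℚ) * (Z j : ℚ) * (t i - t j)^2) + f i j := by
    intro i j; simp only [hf]; ring
  calc (∑ i, ∑ j, (M i j : ℚ) * (Z i : ℚ) * (Z j : ℚ) * t i * t j)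
      = ∑ i, ∑ j, ((M i j : ℚ) * (Z i : ℚ) * (Z j : ℚ) * t i ^ 2
        - (1/2) * ((M i j : ℚ) * (Z i : ℚ) * (Z j : ℚ) * (t i - t j)^2) + f i j) := by
        exact Finset.sum_congr rfl fun i _ => Finset.sum_congr rfl fun j _ => expand i j
    _ = (∑ i, ∑ j, (M i j : ℚ) * (Z i : ℚ) * (Z j : ℚ) * t i ^ 2)
        - (1/2) * (∑ i, ∑ j, (M i j : ℚ) * (Z i : ℚ) * (Z j : ℚ) * (t i - t j)^2)
        + ∑ i, ∑ j, f i j := by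
        simp only [Finset.sum_add_distrib, Finset.sum_sub_distrib, Finset.mul_sum]
    _ = _ := by rw [hzero]; ring

/-- If a connected configuration admits a positive cycle Z with Z·E_i ≤ 0 for all i,
then the intersection matrix is negative semi-definite; if moreover Z² < 0 it is
negative definite. -/
theorem neg_semidef_of_positive_cycle
    {n : ℕ} (M : Matrix (Fin n) (Fin n) ℤ)
    (hsymm : M.IsSymm)
    (hoff : ∀ i j, i ≠ j → 0 ≤ M i j)
    (hconn : ∀ i j : Fin n, Relation.ReflTransGen (fun a b => a ≠ b ∧ 0 < M a b) i j)
    (Z : Fin n → ℤ) (hZpos : ∀ i, 0 < Z i) (hZ : ∀ i, M.mulVec Z i ≤ 0) :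
    (∀ x : Fin n → ℤ, x ⬝ᵥ M.mulVec x ≤ 0) ∧
      (Z ⬝ᵥ M.mulVec Z < 0 → ∀ x : Fin n → ℤ, x ≠ 0 → x ⬝ᵥ M.mulVec x < 0) := by
  have hZQpos : ∀ i, (0:ℚ) < (Z i : ℚ) := fun i => by exact_mod_cast hZpos i
  have hZQ : ∀ i, ((M.mulVec Z i : ℤ) : ℚ) ≤ 0 := fun i => by exact_mod_cast hZ i
  -- nonpositivity of the first sum's terms, nonnegativity of the second's
  have hA : ∀ (x : Fin n → ℤ) (i : Fin n),
      ((M.mulVec Z i : ℤ) : ℚ) * (Z i : ℚ) * ((x i : ℚ) / (Z i : ℚ))^2 ≤ 0 := by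
    intro x i
    have h1 : ((M.mulVec Z i : ℤ) : ℚ) * (Z i : ℚ) ≤ 0 :=
      mul_nonpos_of_nonpos_of_nonneg (hZQ i) (hZQpos i).le
    exact mul_nonpos_of_nonpos_of_nonneg h1 (sq_nonneg _)
  have hB : ∀ (x : Fin n → ℤ) (i j : Fin n),
      0 ≤ (M i j : ℚ) * (Z i : ℚ) * (Z j : ℚ) *
          (((x i : ℚ) / (Z i : ℚ)) - ((x j : ℚ) / (Z j : ℚ)))^2 := by
    intro x i j
    rcases eq_or_ne i j with rfl | hij
    · simp
    · have hM : (0:ℚ) ≤ (M i j : ℚ) := by exact_mod_cast hoff i j hij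
      exact mul_nonneg (mul_nonneg (mul_nonneg hM (hZQpos i).le) (hZQpos j).le) (sq_nonneg _)
  have semidef : ∀ x : Fin n → ℤ, x ⬝ᵥ M.mulVec x ≤ 0 := by
    intro x
    have : ((x ⬝ᵥ M.mulVec x : ℤ) : ℚ) ≤ 0 := by
      rw [key_identity M hsymm Z hZpos x]
      have h1 : (∑ i, ((M.mulVec Z i : ℤ) : ℚ) * (Z i : ℚ) * ((x i : ℚ) / (Z i : ℚ))^2) ≤ 0 :=
        Finset.sum_nonpos fun i _ => hA x i
      have h2 : (0:ℚ) ≤ ∑ i, ∑ j, (M i j : ℚ) * (Z i : ℚ) * (Z j : ℚ) *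
          (((x i : ℚ) / (Z i : ℚ)) - ((x j : ℚ) / (Z j : ℚ)))^2 :=
        Finset.sum_nonneg fun i _ => Finset.sum_nonneg fun j _ => hB x i j
      linarith
    exact_mod_cast this
  refine ⟨semidef, fun hZ2 x hx => ?_⟩
  rcases lt_or_eq_of_le (semidef x) with h | h
  · exact h
  exfalso
  -- from xᵀMx = 0 deduce both sums vanish
  have hkey := key_identity M hsymm Z hZpos x
  rw [h] at hkey
  have h1 : (∑ i, ((M.mulVec Z i : ℤ) : ℚ) * (Z i : ℚ) * ((x i : ℚ) / (Z i : ℚ))^2) ≤ 0 :=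
    Finset.sum_nonpos fun i _ => hA x i
  have h2 : (0:ℚ) ≤ ∑ i, ∑ j, (M i j : ℚ) * (Z i : ℚ) * (Z j : ℚ) *
      (((x i : ℚ) / (Z i : ℚ)) - ((x j : ℚ) / (Z j : ℚ)))^2 :=
    Finset.sum_nonneg fun i _ => Finset.sum_nonneg fun j _ => hB x i j
  push_cast at hkey
  have hA0 : (∑ i, ((M.mulVec Z i : ℤ) : ℚ) * (Z i : ℚ) * ((x i : ℚ) / (Z i : ℚ))^2) = 0 := by
    linarith
  have hB0 : (∑ i, ∑ j, (M i j : ℚ) * (Z i : ℚ) * (Z j : ℚ) *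
      (((x i : ℚ) / (Z i : ℚ)) - ((x j : ℚ) / (Z j : ℚ)))^2) = 0 := by
    linarith
  -- each term of B vanishes; edges force equal ratios
  have hBterm : ∀ i j : Fin n, (M i j : ℚ) * (Z i : ℚ) * (Z j : ℚ) *
      (((x i : ℚ) / (Z i : ℚ)) - ((x j : ℚ) / (Z j : ℚ)))^2 = 0 := by
    intro i j
    have houter := (Finset.sum_eq_zero_iff_of_nonneg
      (fun i _ => Finset.sum_nonneg fun j _ => hB x i j)).mp hB0 i (Finset.mem_univ i)
    exact (Finset.sum_eq_zero_iff_of_nonneg (fun j _ => hB x i j)).mp houter j (Finset.mem_univ j)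
  have hedge : ∀ i j : Fin n, i ≠ j → 0 < M i j →
      (x i : ℚ) / (Z i : ℚ) = (x j : ℚ) / (Z j : ℚ) := by
    intro i j hij hM
    have hMQ : (0:ℚ) < (M i j : ℚ) := by exact_mod_cast hM
    have := hBterm i j
    have hne : (M i j : ℚ) * (Z i : ℚ) * (Z j : ℚ) ≠ 0 :=
      (mul_pos (mul_pos hMQ (hZQpos i)) (hZQpos j)).ne'
    have hsq : (((x i : ℚ) / (Z i : ℚ)) - ((x j : ℚ) / (Z j : ℚ)))^2 = 0 := by
      exact (mul_eq_zero.mp this).resolve_left hne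
    have := pow_eq_zero_iff (n := 2) (by norm_num) |>.mp hsq
    linarith
  have hconst : ∀ i j : Fin n, (x i : ℚ) / (Z i : ℚ) = (x j : ℚ) / (Z j : ℚ) := by
    intro i j
    induction hconn i j with
    | refl => rfl
    | tail _ hbc ih => exact ih.trans (hedge _ _ hbc.1 hbc.2)
  -- each term of A vanishes
  have hAterm : ∀ i : Fin n,
      ((M.mulVec Z i : ℤ) : ℚ) * (Z i : ℚ) * ((x i : ℚ) / (Z i : ℚ))^2 = 0 :=
    fun i => (Finset.sum_eq_zero_iff_of_nonpos (fun i _ => hA x i)).mp hA0 i (Finset.mem_univ i)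
  -- some i0 has (MZ)_{i0} < 0
  have hZ2' : ∃ i, Z i * M.mulVec Z i < 0 := by
    by_contra hcon
    push_neg at hcon
    have : (0:ℤ) ≤ Z ⬝ᵥ M.mulVec Z := Finset.sum_nonneg fun i _ => hcon i
    linarith
  obtain ⟨i0, hi0⟩ := hZ2'
  have hMZ0 : ((M.mulVec Z i0 : ℤ) : ℚ) < 0 := by
    have : M.mulVec Z i0 < 0 := by
      by_contra hcon
      push_neg at hcon
      exact absurd (mul_nonneg (hZpos i0).le hcon) (not_le.mpr hi0)
    exact_mod_cast this
  have ht0 : (x i0 : ℚ) / (Z i0 : ℚ) = 0 := by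
    have hterm := hAterm i0
    have hne : ((M.mulVec Z i0 : ℤ) : ℚ) * (Z i0 : ℚ) ≠ 0 :=
      (mul_neg_of_neg_of_pos hMZ0 (hZQpos i0)).ne
    have hsq : ((x i0 : ℚ) / (Z i0 : ℚ))^2 = 0 := (mul_eq_zero.mp hterm).resolve_left hne
    exact pow_eq_zero_iff (n := 2) (by norm_num) |>.mp hsq
  apply hx
  funext i
  have : (x i : ℚ) / (Z i : ℚ) = 0 := (hconst i i0).trans ht0
  have hxi : (x i : ℚ) = 0 :=
    (div_eq_zero_iff.mp this).resolve_right (by exact_mod_cast (hZpos i).ne')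
  exact_mod_cast hxi
end

section
/- The set of cycles D > 0 with support the full exceptional set and D·E_i ≤ 0 for all i, is closed under taking coordinatewise minimum; hence there is a unique smallest such cycle (the fundamental cycle). -/
open Matrix

/-- Clear denominators of a rational vector. -/
lemma exists_int_scaling {n : ℕ} (x : Fin n → ℚ) :
    ∃ q : ℤ, 0 < q ∧ ∃ y : Fin n → ℤ, ∀ i, (y i : ℚ) = (q : ℚ) * x i := by
  classical
  refine ⟨∏ i, ((x i).den : ℤ), ?_, ?_⟩
  · exact Finset.prod_pos fun i _ => Int.natCast_pos.mpr (x i).pos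
  · refine ⟨fun i => (x i).num * ((∏ j, ((x j).den : ℤ)) / ((x i).den : ℤ)), fun i => ?_⟩
    show (((x i).num * ((∏ j, ((x j).den : ℤ)) / ((x i).den : ℤ)) : ℤ) : ℚ)
        = ((∏ j, ((x j).den : ℤ) : ℤ) : ℚ) * x i
    have hd : ((x i).den : ℤ) ∣ ∏ j, ((x j).den : ℤ) :=
      Finset.dvd_prod_of_mem _ (Finset.mem_univ i)
    obtain ⟨c, hc⟩ := hd
    have hden : ((x i).den : ℤ) ≠ 0 := Int.natCast_ne_zero.mpr (x i).den_nz
    rw [hc, Int.mul_ediv_cancel_left _ hden]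
    have hden' : ((x i).den : ℚ) ≠ 0 := by exact_mod_cast hden
    have hx2 : ((x i).num : ℚ) = x i * ((x i).den : ℚ) :=
      (div_eq_iff hden').mp (Rat.num_div_den (x i))
    push_cast
    rw [hx2]
    ring

/-- The set of cycles D > 0 with full support and D·E_i ≤ 0 for all i is closed
under coordinatewise minimum; hence there is a unique smallest such cycle (the
fundamental cycle). -/
theorem fundamental_cycle_exists
    {n : ℕ} (M : Matrix (Fin n) (Fin n) ℤ)
    (hsymm : M.IsSymm)
    (hoff : ∀ i j, i ≠ j → 0 ≤ M i j)
    (hconn : ∀ i j : Fin n, Relation.ReflTransGen (fun a b => a ≠ b ∧ 0 < M a b) i j)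
    (hneg : ∀ x : Fin n → ℤ, x ≠ 0 → x ⬝ᵥ M.mulVec x < 0) :
    (∀ D₁ D₂ : Fin n → ℤ,
        ((∀ i, 1 ≤ D₁ i) ∧ ∀ i, M.mulVec D₁ i ≤ 0) →
        ((∀ i, 1 ≤ D₂ i) ∧ ∀ i, M.mulVec D₂ i ≤ 0) →
        ((∀ i, 1 ≤ min (D₁ i) (D₂ i)) ∧
          ∀ i, M.mulVec (fun j => min (D₁ j) (D₂ j)) i ≤ 0)) ∧
    (∃! Z : Fin n → ℤ, ((∀ i, 1 ≤ Z i) ∧ ∀ i, M.mulVec Z i ≤ 0) ∧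
        ∀ D : Fin n → ℤ, ((∀ i, 1 ≤ D i) ∧ ∀ i, M.mulVec D i ≤ 0) → Z ≤ D) := by
  classical
  -- key comparison lemma
  have key : ∀ (D E : Fin n → ℤ) (i : Fin n), (∀ j, M.mulVec D j ≤ 0) →
      E i = D i → (∀ j, E j ≤ D j) → M.mulVec E i ≤ 0 := by
    intro D E i hD2 hEi hE
    have h : M.mulVec E i ≤ M.mulVec D i := by
      simp only [mulVec, dotProduct]
      apply Finset.sum_le_sum
      intro j _
      rcases eq_or_ne j i with rfl | hji
      · rw [hEi]
      · exact mul_le_mul_of_nonneg_left (hE j) (hoff i j (Ne.symm hji))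
    exact h.trans (hD2 i)
  constructor
  · rintro D₁ D₂ ⟨h11, h12⟩ ⟨h21, h22⟩
    refine ⟨fun i => le_min (h11 i) (h21 i), fun i => ?_⟩
    rcases le_total (D₁ i) (D₂ i) with h | h
    · exact key D₁ _ i h12 (min_eq_left h) (fun j => min_le_left _ _)
    · exact key D₂ _ i h22 (min_eq_right h) (fun j => min_le_right _ _)
  · -- Existence of at least one element of the set.
    set Mq : Matrix (Fin n) (Fin n) ℚ := M.map (Int.cast : ℤ → ℚ) with hMq
    have hMqnn : ∀ i j, i ≠ j → (0:ℚ) ≤ Mq i j := by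
      intro i j hij
      simp only [Mq, Matrix.map_apply]
      exact_mod_cast hoff i j hij
    have hcast : ∀ (x : Fin n → ℤ) (i : Fin n),
        ((M.mulVec x i : ℤ) : ℚ) = Mq.mulVec (fun j => (x j : ℚ)) i := by
      intro x i
      simp [Mq, mulVec, dotProduct, Matrix.map_apply]
    -- negative definiteness over ℚ
    have hnegQ : ∀ x : Fin n → ℚ, x ≠ 0 → x ⬝ᵥ Mq.mulVec x < 0 := by
      intro x hx
      obtain ⟨q, hq, y, hy⟩ := exists_int_scaling x
      have hqQ : ((q:ℚ)) ≠ 0 := by exact_mod_cast hq.ne'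
      have hyne : y ≠ 0 := by
        intro h0
        apply hx
        funext i
        have := hy i
        rw [h0] at this
        simp at this
        rcases this with h | h
        · exact absurd h (by exact_mod_cast hqQ)
        · simpa using h
      have hZ : y ⬝ᵥ M.mulVec y < 0 := hneg y hyne
      have hc : ((y ⬝ᵥ M.mulVec y : ℤ) : ℚ) = (q : ℚ)^2 * (x ⬝ᵥ Mq.mulVec x) := by
        simp only [dotProduct, mulVec, Mq, Matrix.map_apply]
        push_cast
        simp only [hy, Finset.mul_sum]
        refine Finset.sum_congr rfl fun i _ => ?_
        refine Finset.sum_congr rfl fun j _ => ?_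
        ring
      have hq2 : (0:ℚ) < (q:ℚ)^2 := by positivity
      have hlt : (q:ℚ)^2 * (x ⬝ᵥ Mq.mulVec x) < 0 := by
        rw [← hc]; exact_mod_cast hZ
      nlinarith
    -- Mq is invertible (as linear map), so solve Mq w = -1
    have hsurj : Function.Surjective Mq.mulVecLin := by
      rw [← LinearMap.injective_iff_surjective]
      intro a b hab
      by_contra hne
      have hab' : Mq.mulVec a = Mq.mulVec b := by
        simpa [Matrix.mulVecLin_apply] using hab
      have hsub : Mq.mulVec (a - b) = 0 := by
        rw [Matrix.mulVec_sub, hab', sub_self]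
      have h1 : (a - b) ⬝ᵥ Mq.mulVec (a - b) < 0 := hnegQ _ (sub_ne_zero.mpr hne)
      rw [hsub] at h1
      simp at h1
    obtain ⟨w, hw⟩ := hsurj (fun _ => (-1 : ℚ))
    rw [Matrix.mulVecLin_apply] at hw
    -- w is nonnegative
    set p : Fin n → ℚ := fun i => max (w i) 0 with hp
    set m : Fin n → ℚ := fun i => max (-w i) 0 with hm
    have hpm : ∀ i, w i = p i - m i := by
      intro i
      simp only [hp, hm]
      rcases le_total (w i) 0 with h | h
      · rw [max_eq_right h, max_eq_left (by linarith)]; ring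
      · rw [max_eq_left h, max_eq_right (by linarith)]; ring
    have hpnn : ∀ i, 0 ≤ p i := fun i => le_max_right _ _
    have hmnn : ∀ i, 0 ≤ m i := fun i => le_max_right _ _
    have hpm0 : ∀ i, m i * p i = 0 := by
      intro i
      simp only [hp, hm]
      rcases le_total (w i) 0 with h | h
      · rw [max_eq_right h]; ring
      · rw [max_eq_right (by linarith : -w i ≤ 0)]; ring
    have hm0 : m = 0 := by
      by_contra hmne
      have hlt : m ⬝ᵥ Mq.mulVec m < 0 := hnegQ m hmne
      have h1 : 0 ≤ m ⬝ᵥ Mq.mulVec p := by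
        simp only [dotProduct, mulVec, Finset.mul_sum]
        apply Finset.sum_nonneg
        intro i _
        apply Finset.sum_nonneg
        intro j _
        rcases eq_or_ne i j with rfl | hij
        · rw [show m i * (Mq i i * p i) = (m i * p i) * Mq i i by ring, hpm0 i, zero_mul]
        · exact mul_nonneg (hmnn i) (mul_nonneg (hMqnn i j hij) (hpnn j))
      have h2 : m ⬝ᵥ Mq.mulVec w = -(∑ i, m i) := by
        rw [hw]
        simp [dotProduct]
      have hwpm : w = p - m := funext fun i => hpm i
      have h3 : Mq.mulVec w = Mq.mulVec p - Mq.mulVec m := by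
        rw [hwpm, Matrix.mulVec_sub]
      have h4 : m ⬝ᵥ Mq.mulVec m = m ⬝ᵥ Mq.mulVec p - m ⬝ᵥ Mq.mulVec w := by
        rw [h3, dotProduct_sub]
        ring
      have h5 : 0 ≤ ∑ i, m i := Finset.sum_nonneg fun i _ => hmnn i
      rw [h4, h2] at hlt
      linarith
    have hwnn : ∀ i, 0 ≤ w i := by
      intro i
      have := congrFun hm0 i
      simp only [hm, Pi.zero_apply] at this
      have h := le_max_left (-w i) 0
      rw [this] at h
      linarith
    have hwpos : ∀ i, 0 < w i := by
      intro i
      rcases (hwnn i).lt_or_eq with h | h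
      · exact h
      · exfalso
        have hwi := congrFun hw i
        have : (0:ℚ) ≤ Mq.mulVec w i := by
          simp only [mulVec, dotProduct]
          apply Finset.sum_nonneg
          intro j _
          rcases eq_or_ne j i with rfl | hji
          · rw [← h]; ring_nf; simp
          · exact mul_nonneg (hMqnn i j (Ne.symm hji)) (hwnn j)
        rw [hwi] at this
        linarith
    -- get an integer solution
    obtain ⟨q, hq, y, hy⟩ := exists_int_scaling w
    have hy1 : ∀ i, 1 ≤ y i := by
      intro i
      have : (0:ℚ) < (y i : ℚ) := by
        rw [hy i]
        exact mul_pos (by exact_mod_cast hq) (hwpos i)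
      have : (0:ℤ) < y i := by exact_mod_cast this
      omega
    have hy2 : ∀ i, M.mulVec y i ≤ 0 := by
      intro i
      have hcq : ((M.mulVec y i : ℤ) : ℚ) = (q:ℚ) * (Mq.mulVec w i) := by
        rw [hcast]
        simp only [mulVec, dotProduct, Finset.mul_sum]
        refine Finset.sum_congr rfl fun j _ => ?_
        rw [hy j]
        ring
      have : ((M.mulVec y i : ℤ) : ℚ) < 0 := by
        rw [hcq, congrFun hw i]
        have : (0:ℚ) < q := by exact_mod_cast hq
        linarith
      exact_mod_cast this.le
    -- the set of solutions
    set P : (Fin n → ℤ) → Prop := fun D => (∀ i, 1 ≤ D i) ∧ ∀ i, M.mulVec D i ≤ 0 with hP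
    have hne : ∃ D, P D := ⟨y, hy1, hy2⟩
    -- least value in each coordinate
    have hleast : ∀ j : Fin n, ∃ v : ℤ, (∃ D, P D ∧ D j = v) ∧
        ∀ k : ℤ, (∃ D, P D ∧ D j = k) → v ≤ k := by
      intro j
      apply Int.exists_least_of_bdd (P := fun k => ∃ D, P D ∧ D j = k)
      · exact ⟨1, fun k ⟨D, hD, hDk⟩ => hDk ▸ hD.1 j⟩
      · exact ⟨y j, y, ⟨hy1, hy2⟩, rfl⟩
    choose Z hZmem hZle using hleast
    have hZP : P Z := by
      constructor
      · intro i
        obtain ⟨D, hD, hDi⟩ := hZmem i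
        rw [← hDi]
        exact hD.1 i
      · intro i
        obtain ⟨D, hD, hDi⟩ := hZmem i
        refine key D Z i hD.2 hDi.symm fun j => ?_
        exact hZle j (D j) ⟨D, hD, rfl⟩
    have hZmin : ∀ D : Fin n → ℤ, P D → Z ≤ D :=
      fun D hD j => hZle j (D j) ⟨D, hD, rfl⟩
    exact ⟨Z, ⟨hZP, hZmin⟩, fun Y ⟨hYP, hYmin⟩ =>
      le_antisymm (hYmin Z hZP) (hZmin Y hYP)⟩
end

section
/- If D is a chain-connected cycle, then p_a(D) ≥ p_a(C) for every subcycle 0 < C < D. -/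
open Matrix

/-- If D is chain-connected, then p_a(D) ≥ p_a(C) for every subcycle 0 < C < D. -/
theorem chainConnected_genus_mono
    {n : ℕ} (M : Matrix (Fin n) (Fin n) ℤ) (K : Fin n → ℤ)
    (hsymm : M.IsSymm)
    (heven : ∀ D : Fin n → ℤ, Even (D ⬝ᵥ M.mulVec D + D ⬝ᵥ K))
    (pa : (Fin n → ℤ) → ℤ)
    (hpa : ∀ D : Fin n → ℤ, pa D = 1 + (D ⬝ᵥ M.mulVec D + D ⬝ᵥ K) / 2)
    (hrat : ∀ i, 0 ≤ pa (Pi.single i 1))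
    (D : Fin n → ℤ) (hD : 0 < D)
    (hchain : ∀ C : Fin n → ℤ, 0 < C → C < D → ∃ i, C i < D i ∧ 0 < M.mulVec C i)
    (C : Fin n → ℤ) (hC1 : 0 < C) (hC2 : C < D) :
    pa C ≤ pa D := by
  have hpa2 : ∀ E : Fin n → ℤ, 2 * pa E = 2 + (E ⬝ᵥ M.mulVec E + E ⬝ᵥ K) := by
    intro E
    obtain ⟨r, hr⟩ := heven E
    rw [hpa E, hr]
    omega
  have hsym' : ∀ v w : Fin n → ℤ, v ⬝ᵥ M.mulVec w = w ⬝ᵥ M.mulVec v := by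
    intro v w
    rw [Matrix.dotProduct_mulVec, ← Matrix.mulVec_transpose, hsymm.eq, dotProduct_comm]
  have hstep : ∀ (C : Fin n → ℤ) (i : Fin n), 0 < M.mulVec C i →
      pa C ≤ pa (C + Pi.single i 1) := by
    intro C i hi
    set v : Fin n → ℤ := Pi.single i (1:ℤ) with hv
    have hexp : (C+v) ⬝ᵥ M.mulVec (C+v) + (C+v) ⬝ᵥ K
        = (C ⬝ᵥ M.mulVec C + C ⬝ᵥ K) + (v ⬝ᵥ M.mulVec v + v ⬝ᵥ K)
          + 2 * (v ⬝ᵥ M.mulVec C) := by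
      rw [Matrix.mulVec_add, add_dotProduct, add_dotProduct, dotProduct_add,
        dotProduct_add, hsym' C v]
      ring
    have hvpa : 0 ≤ pa v := hrat i
    have h1 := hpa2 C
    have h2 := hpa2 (C+v)
    have h3 := hpa2 v
    have hMC : v ⬝ᵥ M.mulVec C = M.mulVec C i := by
      rw [hv, single_dotProduct, one_mul]
    omega
  have main : ∀ k : ℕ, ∀ C : Fin n → ℤ, 0 < C → C < D →
      (∑ i, (D i - C i)).toNat ≤ k → pa C ≤ pa D := by
    intro k
    induction k with
    | zero =>
      intro C hC1 hC2 hk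
      exfalso
      obtain ⟨hle, j, hj⟩ := Pi.lt_def.mp hC2
      have hpos : D j - C j ≤ ∑ i, (D i - C i) :=
        Finset.single_le_sum (f := fun i => D i - C i)
          (fun i _ => sub_nonneg.mpr (hle i)) (Finset.mem_univ j)
      omega
    | succ k ih =>
      intro C hC1 hC2 hk
      obtain ⟨i, hiD, hiM⟩ := hchain C hC1 hC2
      set C' := C + Pi.single i 1 with hC'
      have hstepC := hstep C i hiM
      have hle' : C' ≤ D := by
        intro j
        by_cases hj : j = i
        · subst hj
          simp only [hC', Pi.add_apply, Pi.single_eq_same]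
          omega
        · simp only [hC', Pi.add_apply, Pi.single_eq_of_ne hj, add_zero]
          exact hC2.le j
      by_cases heq : C' = D
      · rw [← heq]; exact hstepC
      · have hlt' : C' < D := lt_of_le_of_ne hle' heq
        have hpos' : 0 < C' :=
          lt_of_lt_of_le hC1 (le_add_of_nonneg_right
            (Pi.le_def.mpr fun j => by
              by_cases hj : j = i
              · subst hj; simp
              · simp [Pi.single_eq_of_ne hj]))
        have hsum : ∑ j, (D j - C' j) = (∑ j, (D j - C j)) - 1 := by
          simp only [hC', Pi.add_apply]
          have h0 : ∑ x, (D x - (C x + (Pi.single i 1 : Fin n → ℤ) x))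
              = ∑ x, ((D x - C x) - (Pi.single i 1 : Fin n → ℤ) x) := by
            apply Finset.sum_congr rfl; intros; ring
          rw [h0, Finset.sum_sub_distrib, Finset.sum_pi_single']
          simp
        refine le_trans hstepC (ih C' hpos' hlt' ?_)
        omega
  exact main (∑ i, (D i - C i)).toNat C hC1 hC2 le_rfl
end

section
/- For the Yau cycle Y = Σ_{i=1}^m D_i of the Yau sequence D_m < … < D_1 = Z, one has p_a(Y) = m(p_f − 1) + 1, where p_f = p_a(Z). -/
open Matrix

/-- For the Yau cycle Y = Σ_{i=1}^m D_i, with p_a(D_i) = p_f and D_j·D_i = 0 for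
i < j, one has p_a(Y) = m(p_f − 1) + 1. -/
theorem pa_yau_cycle
    {n : ℕ} (M : Matrix (Fin n) (Fin n) ℤ) (K : Fin n → ℤ)
    (hsymm : M.IsSymm)
    (heven : ∀ D : Fin n → ℤ, Even (D ⬝ᵥ M.mulVec D + D ⬝ᵥ K))
    (pa : (Fin n → ℤ) → ℤ)
    (hpa : ∀ D : Fin n → ℤ, pa D = 1 + (D ⬝ᵥ M.mulVec D + D ⬝ᵥ K) / 2)
    (m : ℕ) (hm : 1 ≤ m) (pf : ℤ)
    (D : ℕ → Fin n → ℤ)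
    (hpaD : ∀ i, 1 ≤ i → i ≤ m → pa (D i) = pf)
    (hint : ∀ i j, 1 ≤ i → i < j → j ≤ m → (D j) ⬝ᵥ M.mulVec (D i) = 0) :
    pa (∑ i ∈ Finset.Icc 1 m, D i) = (m : ℤ) * (pf - 1) + 1 := by

  have hsym' : ∀ A B : Fin n → ℤ, B ⬝ᵥ M.mulVec A = A ⬝ᵥ M.mulVec B := by
    intro A B
    rw [Matrix.dotProduct_mulVec, dotProduct_comm, ← Matrix.mulVec_transpose,
      hsymm.eq]
  have hsumdp : ∀ (s : Finset ℕ) (f : ℕ → Fin n → ℤ) (v : Fin n → ℤ),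
      (∑ i ∈ s, f i) ⬝ᵥ v = ∑ i ∈ s, f i ⬝ᵥ v := by
    intro s f v
    simp only [dotProduct, Finset.sum_apply, Finset.sum_mul]
    exact Finset.sum_comm
  have pa_add : ∀ A B : Fin n → ℤ,
      pa (A + B) = pa A + pa B + A ⬝ᵥ M.mulVec B - 1 := by
    intro A B
    have hQ : (A + B) ⬝ᵥ M.mulVec (A + B) + (A + B) ⬝ᵥ K =
        (A ⬝ᵥ M.mulVec A + A ⬝ᵥ K) + (B ⬝ᵥ M.mulVec B + B ⬝ᵥ K) +
          2 * (A ⬝ᵥ M.mulVec B) := by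
      rw [Matrix.mulVec_add, add_dotProduct, add_dotProduct,
        dotProduct_add, dotProduct_add, hsym' A B]
      ring
    obtain ⟨a, ha⟩ := heven A
    obtain ⟨b, hb⟩ := heven B
    rw [hpa, hpa, hpa, hQ, ha, hb]
    omega
  have key : ∀ k, 1 ≤ k → k ≤ m →
      pa (∑ i ∈ Finset.Icc 1 k, D i) = (k : ℤ) * (pf - 1) + 1 := by
    intro k hk
    induction k, hk using Nat.le_induction with
    | base =>
      intro _
      rw [Finset.Icc_self, Finset.sum_singleton, hpaD 1 le_rfl hm]
      push_cast; ring
    | succ k hk ih =>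
      intro hkm
      have hkm' : k ≤ m := le_trans (Nat.le_succ k) hkm
      rw [Finset.sum_Icc_succ_top (by omega : 1 ≤ k + 1), pa_add, ih hkm',
        hpaD (k + 1) (by omega) hkm]
      have hcross : (∑ i ∈ Finset.Icc 1 k, D i) ⬝ᵥ M.mulVec (D (k + 1)) = 0 := by
        rw [hsumdp]
        apply Finset.sum_eq_zero
        intro i hi
        rw [Finset.mem_Icc] at hi
        rw [hsym']
        exact hint i (k + 1) hi.1 (by omega) hkm
      rw [hcross]
      push_cast; ring
  exact key m hm le_rfl
end

section
/- Under the hypotheses of the degree-two setting (Z² = −2, Z essentially irreducible, m > 1, Z − D_m consisting of (−2)-curves), the self-intersections satisfy D_i² = Z² = −2 for all terms 1 ≤ i ≤ m of the Yau sequence. -/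
open Matrix

/-- `Dnext` is the Tyurina component of `Dcur`. -/
def IsTyurina {n : ℕ} (M : Matrix (Fin n) (Fin n) ℤ) (pa : (Fin n → ℤ) → ℤ)
    (Dcur Dnext : Fin n → ℤ) : Prop :=
  (0 < Dnext ∧ Dnext < Dcur ∧ (∀ i, 0 < Dnext i → M.mulVec Dcur i = 0) ∧
      pa Dnext = pa Dcur) ∧
  ∀ D' : Fin n → ℤ,
    (0 < D' ∧ D' < Dcur ∧ (∀ i, 0 < D' i → M.mulVec Dcur i = 0) ∧ pa D' = pa Dcur) →
    D' ≤ Dnext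

/-- In the degree-two setting (Z² = −2, Z essentially irreducible, m > 1,
Z − D_m consisting of (−2)-curves), all Yau-sequence terms satisfy D_i² = −2. -/
theorem yau_sequence_self_intersections
    {n : ℕ} (M : Matrix (Fin n) (Fin n) ℤ) (K : Fin n → ℤ)
    (hsymm : M.IsSymm)
    (heven : ∀ D : Fin n → ℤ, Even (D ⬝ᵥ M.mulVec D + D ⬝ᵥ K))
    (pa : (Fin n → ℤ) → ℤ)
    (hpa : ∀ D : Fin n → ℤ, pa D = 1 + (D ⬝ᵥ M.mulVec D + D ⬝ᵥ K) / 2)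
    (hrat : ∀ i, 0 ≤ pa (Pi.single i 1))
    (Z : Fin n → ℤ)
    (hZfund : (∀ i, 1 ≤ Z i) ∧ (∀ i, M.mulVec Z i ≤ 0) ∧
        ∀ W : Fin n → ℤ, (∀ i, 1 ≤ W i) → (∀ i, M.mulVec W i ≤ 0) → Z ≤ W)
    (hpf : 0 < pa Z)
    (hdeg : Z ⬝ᵥ M.mulVec Z = -2)
    (a : Fin n) (ha : 0 < Z a) (hanot2 : ¬(pa (Pi.single a 1) = 0 ∧ M a a = -2))
    (hess : ∀ i, i ≠ a → 0 < Z i → pa (Pi.single i 1) = 0 ∧ M i i = -2)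
    (Zmin : Fin n → ℤ)
    (hZmin : (0 < Zmin ∧ Zmin ≤ Z ∧ pa Zmin = pa Z) ∧
        ∀ C : Fin n → ℤ, 0 < C → C ≤ Z → pa C = pa Z → Zmin ≤ C)
    (m : ℕ) (hm1 : 1 < m) (D : ℕ → Fin n → ℤ)
    (hD1 : D 1 = Z)
    (hty : ∀ i, 1 ≤ i → i < m → IsTyurina M pa (D i) (D (i + 1)))
    (hterm : (D m) ⬝ᵥ M.mulVec Zmin < 0)
    -- Z − D_m consists of (−2)-curves
    (hdiff : ∀ i, D m i < Z i → pa (Pi.single i 1) = 0 ∧ M i i = -2) :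
    ∀ i, 1 ≤ i → i ≤ m → (D i) ⬝ᵥ M.mulVec (D i) = -2 := by
  intro i hi1 him
  -- monotonicity of the chain
  have hchain : ∀ j k : ℕ, 1 ≤ j → j ≤ k → k ≤ m → D k ≤ D j := by
    intro j k hj hjk hkm
    induction k with
    | zero => omega
    | succ k ih =>
      rcases Nat.lt_or_ge j (k + 1) with h | h
      · have hk1 : 1 ≤ k := by omega
        have hle : D (k + 1) ≤ D k := (hty k hk1 (by omega)).1.2.1.le
        exact hle.trans (ih (by omega) (by omega))
      · have hjk1 : j = k + 1 := by omega
        rw [hjk1]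
  have hKzero : ∀ j, D m j < Z j → K j = 0 := by
    intro j hj
    obtain ⟨hpa0, hMjj⟩ := hdiff j hj
    have h1 := hpa (Pi.single j 1)
    have h2 := heven (Pi.single j 1)
    have hs : (Pi.single j 1 : Fin n → ℤ) ⬝ᵥ M.mulVec (Pi.single j 1) = M j j := by
      simp [dotProduct, Matrix.mulVec, Pi.single_apply, Finset.mul_sum]
    have hk : (Pi.single j 1 : Fin n → ℤ) ⬝ᵥ K = K j := by
      simp [dotProduct, Pi.single_apply]
    rw [hs, hk, hMjj, hpa0] at h1
    rw [hs, hk, hMjj] at h2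
    obtain ⟨c, hc⟩ := h2
    omega
  have hstep : ∀ k, 1 ≤ k → k < m →
      D (k + 1) ⬝ᵥ M.mulVec (D (k + 1)) = D k ⬝ᵥ M.mulVec (D k) := by
    intro k hk1 hkm
    obtain ⟨⟨hpos, hlt, hsupp, hpaeq⟩, _⟩ := hty k hk1 hkm
    have hAB : D (k + 1) ≤ D k := hlt.le
    have hEK : (D k - D (k + 1)) ⬝ᵥ K = 0 := by
      apply Finset.sum_eq_zero
      intro j _
      rcases eq_or_lt_of_le (hAB j) with h | h
      · simp [Pi.sub_apply, h]
      · have hmz : D m j < Z j := by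
          have h1 : D m j ≤ D (k + 1) j := hchain (k + 1) m (by omega) (by omega) le_rfl j
          have h2 : D k j ≤ Z j := by
            have := hchain 1 k le_rfl hk1 (by omega) j
            rwa [hD1] at this
          exact h1.trans_lt (h.trans_le h2)
        simp [hKzero j hmz]
    have e1 := hpa (D (k + 1))
    have e2 := hpa (D k)
    rw [hpaeq] at e1
    obtain ⟨c, hc⟩ := heven (D (k + 1))
    obtain ⟨d, hd⟩ := heven (D k)
    rw [sub_dotProduct] at hEK
    omega
  have key : ∀ i, i ≤ m → 1 ≤ i → D i ⬝ᵥ M.mulVec (D i) = -2 := by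
    intro i
    induction i with
    | zero => intro _ h; omega
    | succ k ih =>
      intro hkm _
      rcases Nat.eq_zero_or_pos k with hk | hk
      · subst hk
        rw [show (0 : ℕ) + 1 = 1 from rfl, hD1]
        exact hdeg
      · rw [hstep k hk (by omega)]
        exact ih (by omega) hk
  exact key i him hi1
end

section
/- For a normal surface singularity of degree one, p_a(i·Y) = i(p−1)m − i(i−1)m/2 + 1 for nonnegative integers i, and this is maximized at i = p, giving max_i p_a(iY) = p(p−1)m/2 + 1. -/
open Matrix

/-- For a degree-one singularity, p_a(iY) = i(p−1)m − i(i−1)m/2 + 1 and this is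
maximized at i = p, giving max_i p_a(iY) = p(p−1)m/2 + 1. -/
theorem pa_multiples_of_yau_cycle
    {n : ℕ} (M : Matrix (Fin n) (Fin n) ℤ) (K : Fin n → ℤ)
    (hsymm : M.IsSymm)
    (heven : ∀ D : Fin n → ℤ, Even (D ⬝ᵥ M.mulVec D + D ⬝ᵥ K))
    (pa : (Fin n → ℤ) → ℤ)
    (hpa : ∀ D : Fin n → ℤ, pa D = 1 + (D ⬝ᵥ M.mulVec D + D ⬝ᵥ K) / 2)
    (m : ℕ) (hm : 1 ≤ m) (p : ℤ) (hp : 0 < p)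
    (Y : Fin n → ℤ)
    (hpaY : pa Y = (m : ℤ) * (p - 1) + 1)
    (hY2 : Y ⬝ᵥ M.mulVec Y = -(m : ℤ)) :
    (∀ i : ℕ, pa ((i : ℤ) • Y) =
        (i : ℤ) * (p - 1) * m - (i : ℤ) * ((i : ℤ) - 1) * m / 2 + 1) ∧
    (∀ i : ℕ, pa ((i : ℤ) • Y) ≤ pa (p • Y)) ∧
    pa (p • Y) = p * (p - 1) * (m : ℤ) / 2 + 1 := by
  -- Determine Y ⬝ᵥ K
  obtain ⟨k, hk⟩ := heven Y
  have hkval : k = (m : ℤ) * (p - 1) := by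
    have h := hpa Y
    rw [hk] at h
    have : (k + k) / 2 = k := by omega
    rw [this] at h
    linarith [hpaY, h]
  have hYK : Y ⬝ᵥ K = 2 * (m : ℤ) * (p - 1) + m := by
    have : Y ⬝ᵥ M.mulVec Y + Y ⬝ᵥ K = k + k := hk
    rw [hY2, hkval] at this
    linarith
  -- closed formula for pa (c • Y)
  have key : ∀ c : ℤ, ∃ t : ℤ, c * (c - 1) = 2 * t ∧
      pa (c • Y) = c * (p - 1) * m - t * m + 1 := by
    intro c
    obtain ⟨t, ht⟩ := Int.even_mul_succ_self (c - 1)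
    have ht' : c * (c - 1) = 2 * t := by ring_nf; ring_nf at ht; linarith
    refine ⟨t, ht', ?_⟩
    have h1 : (c • Y) ⬝ᵥ M.mulVec (c • Y) = c * (c * (Y ⬝ᵥ M.mulVec Y)) := by
      rw [Matrix.mulVec_smul, smul_dotProduct, dotProduct_smul, smul_eq_mul, smul_eq_mul]
    have h2 : (c • Y) ⬝ᵥ K = c * (Y ⬝ᵥ K) := by
      rw [smul_dotProduct, smul_eq_mul]
    rw [hpa, h1, h2, hY2, hYK]
    have hnum : c * (c * -(m : ℤ)) + c * (2 * (m : ℤ) * (p - 1) + m)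
        = 2 * (c * (p - 1) * m - t * m) := by
      nlinarith [ht']
    rw [hnum, Int.mul_ediv_cancel_left _ two_ne_zero]
    ring
  obtain ⟨tp, htp, hpap⟩ := key p
  refine ⟨?_, ?_, ?_⟩
  · intro i
    obtain ⟨t, ht, hval⟩ := key (i : ℤ)
    have hdiv : (i : ℤ) * ((i : ℤ) - 1) * m = 2 * (t * m) := by
      rw [ht]; ring
    rw [hval, hdiv, Int.mul_ediv_cancel_left _ two_ne_zero]
  · intro i
    obtain ⟨t, ht, hval⟩ := key (i : ℤ)
    rw [hval, hpap]
    have hprod : 0 ≤ (p - (i : ℤ)) * (p - (i : ℤ) - 1) := by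
      rcases le_or_gt p (i : ℤ) with h | h
      · exact mul_nonneg_of_nonpos_of_nonpos (by linarith) (by linarith)
      · exact mul_nonneg (by linarith) (by linarith)
    have hm' : (0 : ℤ) ≤ m := by positivity
    nlinarith [mul_nonneg hprod hm']
  · rw [hpap]
    have hdiv : p * (p - 1) * (m : ℤ) = 2 * (tp * m) := by rw [htp]; ring
    rw [hdiv, Int.mul_ediv_cancel_left _ two_ne_zero]
    linarith [htp]
end
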